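/- arXiv:2206.06318 — 3 statements merged into one kernel-verified Lean document; each statement's English description precedes it below -/
import Mathlib

section
/- Let M^(n) be the (n-1)×(n-1) tridiagonal matrix with diagonal entries (a_1+b_1, ..., a_{n-1}+b_{n-1}), superdiagonal entries -a_1, ..., -a_{n-2}, and subdiagonal entries -b_2, ..., -b_{n-1}. Then det(M^(n)) = Σ_{i=1}^{n} (∏_{j=i}^{n-1} a_j)(∏_{j=1}^{i-1} b_j). -/
/-!
Expanding the determinant `D m` of an `m × m` tridiagonal matrix along its last row, and the
resulting second minor along its last column, gives the continuant recurrence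
`D (m + 2) = d (m + 2) * D (m + 1) - u (m + 1) * l (m + 2) * D m`. For `d = a + b`, `u = -a`,
`l = -b` the sum `Δ m` of the statement (with `n = m + 1`) obeys
`Δ (m + 1) = a (m + 1) * Δ m + b 1 ⋯ b (m + 1)`, from which the same recurrence follows, and `D`
and `Δ` agree for `m = 0, 1`.
-/

open Finset

/-- The `(n-1)×(n-1)` tridiagonal matrix `M = I - T` of a birth-death chain:
diagonal `a_i + b_i`, superdiagonal `-a_i`, subdiagonal `-b_i`
(rows/columns indexed by the transient states `1,...,n-1`). -/
noncomputable def triM (a b : ℕ → ℝ) (n : ℕ) : Matrix (Fin (n - 1)) (Fin (n - 1)) ℝ :=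
  Matrix.of fun i j =>
    if (i : ℕ) = (j : ℕ) then a ((i : ℕ) + 1) + b ((i : ℕ) + 1)
    else if (j : ℕ) = (i : ℕ) + 1 then -a ((i : ℕ) + 1)
    else if (j : ℕ) + 1 = (i : ℕ) then -b ((i : ℕ) + 1)
    else 0

namespace Matrix

variable {R : Type*} [CommRing R] {m : ℕ}

theorem det_succ_of_col_last_eq_zero (A : Matrix (Fin (m + 1)) (Fin (m + 1)) R)
    (hA : ∀ i : Fin m, A i.castSucc (Fin.last m) = 0) :
    A.det = A (Fin.last m) (Fin.last m) * (A.submatrix Fin.castSucc Fin.castSucc).det := by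
  rw [det_succ_column A (Fin.last m), Fin.sum_univ_castSucc]
  simp [hA, Fin.succAbove_last, ← two_mul, pow_mul]

theorem det_succ_succ_of_row_last_eq_zero (A : Matrix (Fin (m + 2)) (Fin (m + 2)) R)
    (hA : ∀ j : Fin m, A (Fin.last (m + 1)) j.castSucc.castSucc = 0) :
    A.det = A (Fin.last (m + 1)) (Fin.last (m + 1)) * (A.submatrix Fin.castSucc Fin.castSucc).det
      - A (Fin.last (m + 1)) (Fin.last m).castSucc *
          (A.submatrix Fin.castSucc (Fin.last m).castSucc.succAbove).det := by
  rw [det_succ_row A (Fin.last (m + 1)), Fin.sum_univ_castSucc, Fin.sum_univ_castSucc]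
  simp [hA, Fin.succAbove_last, ← two_mul, pow_mul]
  ring

end Matrix

section Tridiagonal

variable {R : Type*} [CommRing R] (d u l : ℕ → R)

/-- Row and column `i` carry the 1-based index `i + 1`: `d k`, `u k`, `l k` are the diagonal,
superdiagonal and subdiagonal entries in row `k`. -/
def tridiag (m : ℕ) : Matrix (Fin m) (Fin m) R :=
  Matrix.of fun i j =>
    if (i : ℕ) = j then d (i + 1)
    else if (j : ℕ) = i + 1 then u (i + 1)
    else if (j : ℕ) + 1 = i then l (i + 1)
    else 0

theorem tridiag_apply_eq_zero {m : ℕ} {i j : Fin m}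
    (h : (i : ℕ) + 2 ≤ j ∨ (j : ℕ) + 2 ≤ i) :
    tridiag d u l m i j = 0 := by
  rw [tridiag, Matrix.of_apply, if_neg (by omega), if_neg (by omega), if_neg (by omega)]

theorem tridiag_submatrix_castSucc (m : ℕ) :
    (tridiag d u l (m + 1)).submatrix Fin.castSucc Fin.castSucc = tridiag d u l m := by
  ext i j
  simp [tridiag]

theorem det_tridiag_succ_succ (m : ℕ) :
    (tridiag d u l (m + 2)).det =
      d (m + 2) * (tridiag d u l (m + 1)).det - u (m + 1) * l (m + 2) * (tridiag d u l m).det := by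
  rw [Matrix.det_succ_succ_of_row_last_eq_zero _
      (fun j => tridiag_apply_eq_zero d u l (by simp)),
    tridiag_submatrix_castSucc,
    Matrix.det_succ_of_col_last_eq_zero ((tridiag d u l (m + 2)).submatrix _ _)
      (fun i => by
        rw [Matrix.submatrix_apply, Fin.succAbove_castSucc_self, Fin.succ_last]
        exact tridiag_apply_eq_zero d u l (by simp))]
  have hminor : ((tridiag d u l (m + 2)).submatrix Fin.castSucc
      (Fin.last m).castSucc.succAbove).submatrix Fin.castSucc Fin.castSucc = tridiag d u l m := by
    ext i j
    simp [tridiag, Fin.succAbove_castSucc_of_lt _ _ j.castSucc_lt_last]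
  have hdiag : tridiag d u l (m + 2) (Fin.last (m + 1)) (Fin.last (m + 1)) = d (m + 2) := by
    simp [tridiag]
  have hsub : tridiag d u l (m + 2) (Fin.last (m + 1)) (Fin.last m).castSucc = l (m + 2) := by
    simp [tridiag]
    omega
  have hsup : tridiag d u l (m + 2) (Fin.last m).castSucc (Fin.last (m + 1)) = u (m + 1) := by
    simp [tridiag]
  rw [hminor, Matrix.submatrix_apply, Fin.succAbove_castSucc_self, Fin.succ_last, hdiag, hsub, hsup]
  ring

end Tridiagonal

section BirthDeath

variable {R : Type*} [CommRing R] (a b : ℕ → R)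

def birthDeathDelta (m : ℕ) : R :=
  ∑ i ∈ Icc 1 (m + 1), (∏ j ∈ Icc i m, a j) * ∏ j ∈ Icc 1 (i - 1), b j

theorem birthDeathDelta_zero : birthDeathDelta a b 0 = 1 := by
  simp [birthDeathDelta]

theorem birthDeathDelta_succ (m : ℕ) :
    birthDeathDelta a b (m + 1) =
      a (m + 1) * birthDeathDelta a b m + ∏ j ∈ Icc 1 (m + 1), b j := by
  rw [birthDeathDelta, sum_Icc_succ_top (by omega), Icc_eq_empty_of_lt (Nat.lt_succ_self _),
    prod_empty, one_mul, Nat.add_sub_cancel, birthDeathDelta, mul_sum]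
  congr 1
  refine sum_congr rfl fun i hi => ?_
  rw [prod_Icc_succ_top (mem_Icc.1 hi).2]
  ring

theorem birthDeathDelta_succ_succ (m : ℕ) :
    birthDeathDelta a b (m + 2) = (a (m + 2) + b (m + 2)) * birthDeathDelta a b (m + 1)
      - a (m + 1) * b (m + 2) * birthDeathDelta a b m := by
  rw [birthDeathDelta_succ a b (m + 1), prod_Icc_succ_top (by omega),
    birthDeathDelta_succ a b m]
  ring

theorem det_tridiag_birthDeath :
    ∀ m : ℕ, (tridiag (a + b) (-a) (-b) m).det = birthDeathDelta a b m
  | 0 => by simp [birthDeathDelta_zero]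
  | 1 => by simp [birthDeathDelta_succ, birthDeathDelta_zero, tridiag]
  | m + 2 => by
    rw [det_tridiag_succ_succ, det_tridiag_birthDeath (m + 1), det_tridiag_birthDeath m,
      birthDeathDelta_succ_succ]
    simp only [Pi.add_apply, Pi.neg_apply]
    ring

end BirthDeath

/-- `det(I - T) = Δ = ∑_{i=1}^n ∏_{j=i}^{n-1} a_j ∏_{j=1}^{i-1} b_j`. -/
theorem det_triM (n : ℕ) (hn : 2 ≤ n) (a b : ℕ → ℝ) :
    (triM a b n).det =
      ∑ i ∈ Icc 1 n, (∏ j ∈ Icc i (n - 1), a j) * ∏ j ∈ Icc 1 (i - 1), b j := by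
  have hM : triM a b n = tridiag (a + b) (-a) (-b) (n - 1) := rfl
  obtain ⟨m, rfl⟩ : ∃ m, n = m + 1 := ⟨n - 1, by omega⟩
  rw [hM, det_tridiag_birthDeath, birthDeathDelta, Nat.add_sub_cancel]
end

section
/- Assume Δ = Σ_{k=1}^{n} (∏_{l=k}^{n-1} a_l)(∏_{l=1}^{k-1} b_l) ≠ 0. Then the matrix M = I - T (the (n-1)×(n-1) tridiagonal matrix with diagonal a_i+b_i, superdiagonal -a_i, subdiagonal -b_i) is invertible, and its inverse has entries (M^{-1})_{i,j} = (1/Δ) · (Σ_{k=1}^{min{i,j}} ∏_{l=k}^{j-1} a_l ∏_{l=1}^{k-1} b_l) · (Σ_{k=max{i,j}+1}^{n} ∏_{l=k}^{n-1} a_l ∏_{l=j+1}^{k-1} b_l). -/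
/-!
With `x 0 = x n = 0`, row `i` of `M (x 1, …, x (n-1))` is the second-order difference
`diffOp a b x i = b (x (i+1) - x i) - a (x (i+2) - x (i+1))`. For the (0-based) column `j`,
`leftSol` solves the homogeneous equation below row `j` and vanishes at `0`, `rightSol` solves it
above row `j` and vanishes at `n`, and the discrete Green's function `green` glues them at
`j + 1`. So `M green` vanishes off row `j`, while on row `j` it is the discrete Wronskian of the
two solutions, which splitting the sum defining `Δ` at `j + 1` identifies with `Δ`.
Hence `M⁻¹ = Δ⁻¹ green`.
-/

open Finset

namespace Finset

variable {M : Type*} [CommMonoid M]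

@[to_additive]
theorem prod_Icc_consecutive (f : ℕ → M) {m n k : ℕ} (hmn : m ≤ n + 1) (hnk : n ≤ k) :
    (∏ i ∈ Icc m n, f i) * ∏ i ∈ Icc (n + 1) k, f i = ∏ i ∈ Icc m k, f i := by
  simp only [← Ico_add_one_right_eq_Icc]
  exact prod_Ico_consecutive f hmn (by omega)

@[to_additive]
theorem prod_Icc_succ_bot {a b : ℕ} (hab : a ≤ b) (f : ℕ → M) :
    ∏ k ∈ Icc a b, f k = f a * ∏ k ∈ Icc (a + 1) b, f k := by
  rw [← prod_Icc_consecutive f (Nat.le_succ a) hab, Icc_self, prod_singleton]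

end Finset

namespace TriM

variable (a b : ℕ → ℝ)

def diffOp (x : ℕ → ℝ) (i : ℕ) : ℝ :=
  b (i + 1) * (x (i + 1) - x i) - a (i + 1) * (x (i + 2) - x (i + 1))

theorem sum_triM_mul_eq_diffOp {n : ℕ} {x : ℕ → ℝ} (hx0 : x 0 = 0) (hxn : x n = 0)
    (i : Fin (n - 1)) : ∑ k : Fin (n - 1), triM a b n i k * x (k + 1) = diffOp a b x i := by
  obtain ⟨i, hi⟩ := i
  have hsplit : ∀ k : ℕ, (if i = k then a (i + 1) + b (i + 1) else if k = i + 1 then -a (i + 1)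
      else if k + 1 = i then -b (i + 1) else 0) * x (k + 1) =
      (if k = i then (a (i + 1) + b (i + 1)) * x (i + 1) else 0) +
      (if k = i + 1 then -a (i + 1) * x (i + 2) else 0) +
      (if k + 1 = i then -b (i + 1) * x i else 0) := by
    intro k
    split_ifs <;> subst_vars <;> first | omega | ring
  have hsuper : (if i + 1 ∈ range (n - 1) then -a (i + 1) * x (i + 2) else 0) =
      -a (i + 1) * x (i + 2) := by
    split_ifs with h
    · rfl
    · rw [show i + 2 = n by rw [mem_range] at h; omega, hxn, mul_zero]
  have hsub : (∑ k ∈ range (n - 1), if k + 1 = i then -b (i + 1) * x i else 0) =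
      -b (i + 1) * x i := by
    cases i with
    | zero => simp [hx0]
    | succ i =>
      simp only [Nat.add_right_cancel_iff, sum_ite_eq', mem_range]
      rw [if_pos (by omega)]
  have hrange : ∑ k ∈ range (n - 1), (if i = k then a (i + 1) + b (i + 1)
      else if k = i + 1 then -a (i + 1) else if k + 1 = i then -b (i + 1) else 0) * x (k + 1) =
      diffOp a b x i := by
    rw [sum_congr rfl fun k _ => hsplit k, sum_add_distrib, sum_add_distrib, sum_ite_eq',
      sum_ite_eq', if_pos (mem_range.2 hi), hsuper, hsub, diffOp]
    ring
  rw [← Fin.sum_univ_eq_sum_range] at hrange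
  exact hrange

theorem diffOp_mul_const (x : ℕ → ℝ) (c : ℝ) (i : ℕ) :
    diffOp a b (fun m => x m * c) i = diffOp a b x i * c := by
  simp only [diffOp]
  ring

noncomputable def triDelta (n : ℕ) : ℝ :=
  ∑ i ∈ Icc 1 n, (∏ j ∈ Icc i (n - 1), a j) * ∏ j ∈ Icc 1 (i - 1), b j

noncomputable def leftSol (j m : ℕ) : ℝ :=
  ∑ k ∈ Icc 1 m, (∏ l ∈ Icc k j, a l) * ∏ l ∈ Icc 1 (k - 1), b l

noncomputable def rightSol (n j m : ℕ) : ℝ :=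
  ∑ k ∈ Icc (m + 1) n, (∏ l ∈ Icc k (n - 1), a l) * ∏ l ∈ Icc (j + 2) (k - 1), b l

noncomputable def green (n j m : ℕ) : ℝ :=
  leftSol a b j (min m (j + 1)) * rightSol a b n j (max m (j + 1))

noncomputable def greenMatrix (n : ℕ) : Matrix (Fin (n - 1)) (Fin (n - 1)) ℝ :=
  Matrix.of fun i j => green a b n j (i + 1)

theorem leftSol_succ (j m : ℕ) :
    leftSol a b j (m + 1) =
      leftSol a b j m + (∏ l ∈ Icc (m + 1) j, a l) * ∏ l ∈ Icc 1 m, b l := by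
  rw [leftSol, sum_Icc_succ_top (by omega), leftSol, Nat.add_sub_cancel]

theorem rightSol_of_lt {n m : ℕ} (j : ℕ) (h : m < n) :
    rightSol a b n j m =
      (∏ l ∈ Icc (m + 1) (n - 1), a l) * (∏ l ∈ Icc (j + 2) m, b l) +
        rightSol a b n j (m + 1) := by
  rw [rightSol, sum_Icc_succ_bot (by omega), rightSol, Nat.add_sub_cancel]

theorem diffOp_leftSol {i j : ℕ} (h : i < j) : diffOp a b (leftSol a b j) i = 0 := by
  rw [diffOp, leftSol_succ a b j (i + 1), leftSol_succ a b j i,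
    prod_Icc_succ_bot (by omega : i + 1 ≤ j),
    prod_Icc_succ_top (by omega : 1 ≤ i + 1)]
  ring

theorem diffOp_rightSol {n i j : ℕ} (hji : j < i) (hin : i + 2 ≤ n) :
    diffOp a b (rightSol a b n j) i = 0 := by
  rw [diffOp, rightSol_of_lt a b j (by omega : i < n), rightSol_of_lt a b j (by omega : i + 1 < n),
    prod_Icc_succ_bot (by omega : i + 1 ≤ n - 1), prod_Icc_succ_top (by omega : j + 2 ≤ i + 1)]
  ring

theorem prod_mul_leftSol {n j : ℕ} (h : j < n) :
    (∏ l ∈ Icc (j + 1) (n - 1), a l) * leftSol a b j (j + 1) =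
      ∑ k ∈ Icc 1 (j + 1), (∏ l ∈ Icc k (n - 1), a l) * ∏ l ∈ Icc 1 (k - 1), b l := by
  rw [leftSol, mul_sum]
  refine sum_congr rfl fun k hk => ?_
  rw [mem_Icc] at hk
  rw [← prod_Icc_consecutive a (by omega : k ≤ j + 1) (by omega : j ≤ n - 1)]
  ring

theorem prod_mul_rightSol (n j : ℕ) :
    (∏ l ∈ Icc 1 (j + 1), b l) * rightSol a b n j (j + 1) =
      ∑ k ∈ Icc (j + 2) n, (∏ l ∈ Icc k (n - 1), a l) * ∏ l ∈ Icc 1 (k - 1), b l := by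
  rw [rightSol, mul_sum]
  refine sum_congr rfl fun k hk => ?_
  rw [mem_Icc] at hk
  rw [← prod_Icc_consecutive b (by omega : 1 ≤ j + 1 + 1) (by omega : j + 1 ≤ k - 1)]
  ring

theorem triDelta_eq_wronskian {n j : ℕ} (h : j < n) :
    triDelta a b n = (∏ l ∈ Icc (j + 1) (n - 1), a l) * leftSol a b j (j + 1) +
      (∏ l ∈ Icc 1 (j + 1), b l) * rightSol a b n j (j + 1) := by
  rw [prod_mul_leftSol a b h, prod_mul_rightSol, triDelta,
    sum_Icc_consecutive _ (by omega : 1 ≤ j + 1 + 1) (by omega : j + 1 ≤ n)]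

theorem green_zero (n j : ℕ) : green a b n j 0 = 0 := by
  simp [green, leftSol]

theorem green_last (n j : ℕ) : green a b n j n = 0 := by
  simp [green, rightSol]

theorem diffOp_green_of_lt {n i j : ℕ} (h : i < j) : diffOp a b (green a b n j) i = 0 := by
  have hG : ∀ m ≤ j + 1, green a b n j m = leftSol a b j m * rightSol a b n j (j + 1) := by
    intro m hm
    rw [green, min_eq_left hm, max_eq_right hm]
  have := diffOp_mul_const a b (leftSol a b j) (rightSol a b n j (j + 1)) i
  rw [diffOp_leftSol a b h, zero_mul] at this
  rw [← this, diffOp, diffOp, hG i (by omega), hG (i + 1) (by omega), hG (i + 2) (by omega)]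

theorem diffOp_green_of_gt {n i j : ℕ} (hji : j < i) (hin : i + 2 ≤ n) :
    diffOp a b (green a b n j) i = 0 := by
  have hG : ∀ m, j + 1 ≤ m →
      green a b n j m = rightSol a b n j m * leftSol a b j (j + 1) := by
    intro m hm
    rw [green, min_eq_right hm, max_eq_left hm, mul_comm]
  have := diffOp_mul_const a b (rightSol a b n j) (leftSol a b j (j + 1)) i
  rw [diffOp_rightSol a b hji hin, zero_mul] at this
  rw [← this, diffOp, diffOp, hG i (by omega), hG (i + 1) (by omega), hG (i + 2) (by omega)]

theorem diffOp_green_self {n j : ℕ} (h : j + 2 ≤ n) :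
    diffOp a b (green a b n j) j = triDelta a b n := by
  have hu : leftSol a b j (j + 1) = leftSol a b j j + ∏ l ∈ Icc 1 j, b l := by
    simp [leftSol_succ]
  have hv : rightSol a b n j (j + 1) =
      (∏ l ∈ Icc (j + 2) (n - 1), a l) + rightSol a b n j (j + 2) := by
    simp [rightSol_of_lt a b j (by omega : j + 1 < n)]
  rw [triDelta_eq_wronskian a b (by omega : j < n), diffOp, green, green, green,
    prod_Icc_succ_bot (by omega : j + 1 ≤ n - 1), prod_Icc_succ_top (by omega : 1 ≤ j + 1)]
  simp only [min_eq_left (Nat.le_succ j), max_eq_right (Nat.le_succ j), min_self, max_self,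
    min_eq_right (Nat.le_succ (j + 1)), max_eq_left (Nat.le_succ (j + 1))]
  rw [hu, hv]
  ring

theorem triM_mul_greenMatrix (n : ℕ) : triM a b n * greenMatrix a b n = triDelta a b n • 1 := by
  ext i j
  rw [Matrix.mul_apply, Matrix.smul_apply, Matrix.one_apply]
  simp only [greenMatrix, Matrix.of_apply]
  rw [sum_triM_mul_eq_diffOp a b (green_zero a b n j) (green_last a b n j)]
  rcases lt_trichotomy (i : ℕ) j with h | h | h
  · rw [diffOp_green_of_lt a b h, if_neg (Fin.ne_of_lt h), smul_zero]
  · rw [Fin.ext h, diffOp_green_self a b (by omega), if_pos rfl, smul_eq_mul, mul_one]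
  · rw [diffOp_green_of_gt a b h (by omega), if_neg (Fin.ne_of_gt h), smul_zero]

end TriM

theorem triM_inverse_general (n : ℕ) (a b : ℕ → ℝ)
    (hΔ : (∑ i ∈ Icc 1 n, (∏ j ∈ Icc i (n - 1), a j) * ∏ j ∈ Icc 1 (i - 1), b j) ≠ 0) :
    IsUnit (triM a b n) ∧
    ∀ i j : Fin (n - 1),
      (triM a b n)⁻¹ i j =
        (1 / (∑ i ∈ Icc 1 n, (∏ j ∈ Icc i (n - 1), a j) * ∏ j ∈ Icc 1 (i - 1), b j)) *
          ((∑ k ∈ Icc 1 (min ((i : ℕ) + 1) ((j : ℕ) + 1)),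
              (∏ l ∈ Icc k (j : ℕ), a l) * ∏ l ∈ Icc 1 (k - 1), b l) *
            ∑ k ∈ Icc (max ((i : ℕ) + 1) ((j : ℕ) + 1) + 1) n,
              (∏ l ∈ Icc k (n - 1), a l) * ∏ l ∈ Icc ((j : ℕ) + 2) (k - 1), b l) := by
  have hinv : triM a b n * ((TriM.triDelta a b n)⁻¹ • TriM.greenMatrix a b n) = 1 := by
    rw [Matrix.mul_smul, TriM.triM_mul_greenMatrix, smul_smul,
      inv_mul_cancel₀ (show TriM.triDelta a b n ≠ 0 from hΔ), one_smul]
  refine ⟨(Matrix.isUnit_iff_isUnit_det _).2 (Matrix.isUnit_det_of_right_inverse hinv),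
    fun i j => ?_⟩
  rw [Matrix.inv_eq_right_inv hinv, one_div]
  rfl

/-- If `Δ ≠ 0` then `M = I - T` is invertible and
`(M⁻¹)_{i,j} = (1/Δ)(∑_{k=1}^{min(i,j)} ∏_{l=k}^{j-1} a_l ∏_{l=1}^{k-1} b_l)
              (∑_{k=max(i,j)+1}^{n} ∏_{l=k}^{n-1} a_l ∏_{l=j+1}^{k-1} b_l)`. -/
theorem triM_inverse (n : ℕ) (hn : 2 ≤ n) (a b : ℕ → ℝ)
    (hΔ : (∑ i ∈ Icc 1 n, (∏ j ∈ Icc i (n - 1), a j) * ∏ j ∈ Icc 1 (i - 1), b j) ≠ 0) :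
    IsUnit (triM a b n) ∧
    ∀ i j : Fin (n - 1),
      (triM a b n)⁻¹ i j =
        (1 / (∑ i ∈ Icc 1 n, (∏ j ∈ Icc i (n - 1), a j) * ∏ j ∈ Icc 1 (i - 1), b j)) *
          ((∑ k ∈ Icc 1 (min ((i : ℕ) + 1) ((j : ℕ) + 1)),
              (∏ l ∈ Icc k (j : ℕ), a l) * ∏ l ∈ Icc 1 (k - 1), b l) *
            ∑ k ∈ Icc (max ((i : ℕ) + 1) ((j : ℕ) + 1) + 1) n,
              (∏ l ∈ Icc k (n - 1), a l) * ∏ l ∈ Icc ((j : ℕ) + 2) (k - 1), b l) :=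
  triM_inverse_general n a b hΔ
end

section
/- Under the birth-death chain setup with a_y, b_y > 0, the expected absorption time τ_y starting from state y (the unique solution of τ_y = 1 + a_y τ_{y+1} + b_y τ_{y-1} + (1-a_y-b_y)τ_y with τ_0 = τ_n = 0) equals τ_y = (1/Δ) Σ_{j=1}^{n-1} (Σ_{k=1}^{min{y,j}} ∏_{l=k}^{j-1} a_l ∏_{l=1}^{k-1} b_l)(Σ_{k=max{y,j}+1}^{n} ∏_{l=k}^{n-1} a_l ∏_{l=j+1}^{k-1} b_l). -/
open Finset

/-!
Write `L f y = a y * (f (y + 1) - f y) + b y * (f (y - 1) - f y)` for the generator of the chain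
(`generator a b`), so that the recurrence for `τ` says `L τ = -1` at the interior states. A solution
of `L e = 0` has increments `e (y + 1) - e y = (∏_{1 ≤ l ≤ y} b l / a l) * (e 1 - e 0)`, so
`e 0 = e n = 0` forces `e = 0`, and `τ` is determined by the recurrence and its boundary values.

In the `j`-th summand of the formula, the first factor is, as a function of `y ≤ j`, harmonic and
zero at `0`; the second is, as a function of `y ≥ j`, harmonic and zero at `n`. Their product
`green y j` is therefore harmonic in `y` away from `j`, and at `y = j` the two one-sided increments
recombine into `L (green · j) j = -Δ`. So `Δ⁻¹ * ∑ j, green y j` solves the same boundary value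
problem as `τ`.
-/

theorem Nat.Icc_sub_one_right_eq_Ico_of_pos {i m : ℕ} (hi : 0 < i) :
    Icc i (m - 1) = Ico i m := by
  ext; simp only [mem_Icc, mem_Ico]; omega

namespace BirthDeath

variable {R : Type*} [CommRing R]

def generator (a b : ℕ → R) : (ℕ → R) →ₗ[R] (ℕ → R) where
  toFun f y := a y * (f (y + 1) - f y) + b y * (f (y - 1) - f y)
  map_add' f g := by ext y; simp only [Pi.add_apply]; ring
  map_smul' c f := by ext y; simp only [Pi.smul_apply, smul_eq_mul, RingHom.id_apply]; ring

theorem generator_apply (a b f : ℕ → R) (y : ℕ) :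
    generator a b f y = a y * (f (y + 1) - f y) + b y * (f (y - 1) - f y) :=
  rfl

section Uniqueness

variable {K : Type*} [Field K] {n : ℕ} {a b e : ℕ → K}

theorem succ_sub_eq_prod_div_mul (ha : ∀ y, 1 ≤ y → y ≤ n - 1 → a y ≠ 0)
    (he : ∀ y, 1 ≤ y → y ≤ n - 1 → generator a b e y = 0) {y : ℕ} (hy : y < n) :
    e (y + 1) - e y = (∏ l ∈ Icc 1 y, b l / a l) * (e 1 - e 0) := by
  induction y with
  | zero => simp
  | succ m ih =>
    have hm := he (m + 1) (by omega) (by omega)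
    rw [generator_apply, Nat.add_sub_cancel] at hm
    rw [prod_Icc_succ_top (by omega), mul_right_comm, ← ih (by omega)]
    field_simp [ha (m + 1) (by omega) (by omega)]
    linear_combination hm

theorem eq_zero_of_generator_eq_zero [LinearOrder K] [IsStrictOrderedRing K]
    (ha : ∀ y, 1 ≤ y → y ≤ n - 1 → 0 < a y) (hb : ∀ y, 1 ≤ y → y ≤ n - 1 → 0 ≤ b y)
    (he0 : e 0 = 0) (hen : e n = 0) (he : ∀ y, 1 ≤ y → y ≤ n - 1 → generator a b e y = 0) :
    ∀ y ≤ n, e y = 0 := by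
  have hsol : ∀ y ≤ n, e y = (∑ i ∈ range y, ∏ l ∈ Icc 1 i, b l / a l) * e 1 := by
    intro y hy
    rw [← sub_zero (e y), ← he0, ← sum_range_sub, sum_mul]
    refine sum_congr rfl fun i hi => ?_
    have hin : i < n := by simp only [mem_range] at hi; omega
    rw [succ_sub_eq_prod_div_mul (fun y h1 h2 => (ha y h1 h2).ne') he hin, he0, sub_zero]
  rcases n.eq_zero_or_pos with rfl | hpos
  · intro y hy
    rwa [Nat.le_zero.mp hy]
  have hsum : 0 < ∑ i ∈ range n, ∏ l ∈ Icc 1 i, b l / a l := by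
    refine sum_pos' (fun i hi => prod_nonneg fun l hl => ?_) ⟨0, mem_range.mpr hpos, by simp⟩
    simp only [mem_range, mem_Icc] at hi hl
    exact div_nonneg (hb l hl.1 (by omega)) (ha l hl.1 (by omega)).le
  have h1 : e 1 = 0 := by
    have := hsol n le_rfl
    rw [hen, eq_comm, mul_eq_zero] at this
    exact this.resolve_left hsum.ne'
  intro y hy
  rw [hsol y hy, h1, mul_zero]

end Uniqueness

section Green

variable (a b : ℕ → R) (n : ℕ)

-- The two factors of the `j`-th summand of the formula, as functions of `m = min y j` and
-- `m = max y j`; products run over `Ico` instead of the statement's `Icc _ (_ - 1)`.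
def leftSum (j m : ℕ) : R :=
  ∑ k ∈ Icc 1 m, (∏ l ∈ Ico k j, a l) * ∏ l ∈ Ico 1 k, b l

def rightSum (j m : ℕ) : R :=
  ∑ k ∈ Icc (m + 1) n, (∏ l ∈ Ico k n, a l) * ∏ l ∈ Ico (j + 1) k, b l

def green (y j : ℕ) : R :=
  leftSum a b j (min y j) * rightSum a b n j (max y j)

def delta : R :=
  ∑ k ∈ Icc 1 n, (∏ l ∈ Ico k n, a l) * ∏ l ∈ Ico 1 k, b l

variable {a b n}

theorem leftSum_succ (j m : ℕ) :
    leftSum a b j (m + 1) =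
      leftSum a b j m + (∏ l ∈ Ico (m + 1) j, a l) * ∏ l ∈ Ico 1 (m + 1), b l :=
  sum_Icc_succ_top (by omega) _

theorem rightSum_eq_add_rightSum_succ (j : ℕ) {m : ℕ} (hm : m < n) :
    rightSum a b n j m =
      (∏ l ∈ Ico (m + 1) n, a l) * (∏ l ∈ Ico (j + 1) (m + 1), b l) +
        rightSum a b n j (m + 1) := by
  rw [rightSum, ← insert_Icc_add_one_left_eq_Icc (by omega), sum_insert (by simp)]
  rfl

theorem generator_leftSum {j y : ℕ} (hy : 1 ≤ y) (hyj : y < j) :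
    generator a b (leftSum a b j) y = 0 := by
  obtain ⟨m, rfl⟩ : ∃ m, y = m + 1 := ⟨y - 1, by omega⟩
  rw [generator_apply, Nat.add_sub_cancel, leftSum_succ, leftSum_succ _ m,
    prod_eq_prod_Ico_succ_bot hyj, prod_Ico_succ_top (by omega : 1 ≤ m + 1)]
  ring

theorem generator_rightSum {j y : ℕ} (hjy : j < y) (hyn : y < n) :
    generator a b (rightSum a b n j) y = 0 := by
  obtain ⟨m, rfl⟩ : ∃ m, y = m + 1 := ⟨y - 1, by omega⟩
  rw [generator_apply, Nat.add_sub_cancel, rightSum_eq_add_rightSum_succ j (by omega : m < n),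
    rightSum_eq_add_rightSum_succ j hyn, prod_eq_prod_Ico_succ_bot hyn,
    prod_Ico_succ_top (by omega : j + 1 ≤ m + 1)]
  ring

theorem delta_eq_add {j : ℕ} (hjn : j ≤ n) :
    delta a b n = (∏ l ∈ Ico j n, a l) * leftSum a b j j +
      (∏ l ∈ Ico 1 (j + 1), b l) * rightSum a b n j j := by
  have hIoc : ∀ m, Icc 1 m = Ioc 0 m := fun m => Icc_add_one_left_eq_Ioc 0 m
  rw [leftSum, rightSum, mul_sum, mul_sum, delta, hIoc, hIoc, Icc_add_one_left_eq_Ioc,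
    ← sum_Ioc_consecutive _ (Nat.zero_le j) hjn]
  congr 1 <;> refine sum_congr rfl fun k hk => ?_ <;> simp only [mem_Ioc] at hk
  · rw [← prod_Ico_consecutive a (by omega : k ≤ j) hjn]; ring
  · rw [← prod_Ico_consecutive b (by omega : 1 ≤ j + 1) (by omega : j + 1 ≤ k)]; ring

theorem generator_green_of_lt {j y : ℕ} (hy : 1 ≤ y) (hyj : y < j) :
    generator a b (green a b n · j) y = 0 := by
  have hL := generator_leftSum (a := a) (b := b) hy hyj
  rw [generator_apply] at hL ⊢
  simp only [green, min_eq_left (by omega : y + 1 ≤ j), max_eq_right (by omega : y + 1 ≤ j),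
    min_eq_left hyj.le, max_eq_right hyj.le, min_eq_left (by omega : y - 1 ≤ j),
    max_eq_right (by omega : y - 1 ≤ j)]
  linear_combination rightSum a b n j j * hL

theorem generator_green_of_gt {j y : ℕ} (hjy : j < y) (hyn : y < n) :
    generator a b (green a b n · j) y = 0 := by
  have hR := generator_rightSum (a := a) (b := b) hjy hyn
  rw [generator_apply] at hR ⊢
  simp only [green, min_eq_right (by omega : j ≤ y + 1), max_eq_left (by omega : j ≤ y + 1),
    min_eq_right hjy.le, max_eq_left hjy.le, min_eq_right (by omega : j ≤ y - 1),
    max_eq_left (by omega : j ≤ y - 1)]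
  linear_combination leftSum a b j j * hR

theorem generator_green_self {j : ℕ} (hj : 1 ≤ j) (hjn : j < n) :
    generator a b (green a b n · j) j = -delta a b n := by
  obtain ⟨m, rfl⟩ : ∃ m, j = m + 1 := ⟨j - 1, by omega⟩
  rw [generator_apply, delta_eq_add hjn.le]
  simp only [green, min_self, max_self, Nat.add_sub_cancel,
    min_eq_right (by omega : m + 1 ≤ m + 1 + 1), max_eq_left (by omega : m + 1 ≤ m + 1 + 1),
    min_eq_left (by omega : m ≤ m + 1), max_eq_right (by omega : m ≤ m + 1)]
  rw [rightSum_eq_add_rightSum_succ _ hjn, leftSum_succ, Ico_self, Ico_self, prod_empty,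
    prod_empty, prod_eq_prod_Ico_succ_bot hjn, prod_Ico_succ_top (by omega : 1 ≤ m + 1)]
  ring

theorem generator_sum_green {y : ℕ} (hy : 1 ≤ y) (hyn : y ≤ n - 1) :
    generator a b (fun x => ∑ j ∈ Icc 1 (n - 1), green a b n x j) y = -delta a b n := by
  rw [← sum_fn, map_sum, Finset.sum_apply, sum_eq_single_of_mem y (mem_Icc.mpr ⟨hy, hyn⟩)]
  · exact generator_green_self hy (by omega)
  · intro j hj hne
    simp only [mem_Icc] at hj
    rcases hne.lt_or_gt with hjy | hyj
    · exact generator_green_of_gt hjy (by omega)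
    · exact generator_green_of_lt hy hyj

theorem green_zero_left (j : ℕ) : green a b n 0 j = 0 := by
  simp [green, leftSum]

theorem green_top_left {j : ℕ} (hj : j ≤ n) : green a b n n j = 0 := by
  simp [green, rightSum, max_eq_left hj]

theorem delta_pos [LinearOrder R] [IsStrictOrderedRing R] (hn : 0 < n)
    (ha : ∀ y, 1 ≤ y → y ≤ n - 1 → 0 < a y) (hb : ∀ y, 1 ≤ y → y ≤ n - 1 → 0 ≤ b y) :
    0 < delta a b n := by
  refine sum_pos'
    (fun k hk => mul_nonneg (prod_nonneg fun l hl => ?_) (prod_nonneg fun l hl => ?_))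
    ⟨1, mem_Icc.mpr ⟨le_rfl, hn⟩, ?_⟩
  · simp only [mem_Icc, mem_Ico] at hk hl
    exact (ha l (by omega) (by omega)).le
  · simp only [mem_Icc, mem_Ico] at hk hl
    exact hb l (by omega) (by omega)
  · rw [Ico_self, prod_empty, mul_one]
    exact prod_pos fun l hl => by simp only [mem_Ico] at hl; exact ha l hl.1 (by omega)

theorem delta_eq_sum_Icc :
    delta a b n = ∑ i ∈ Icc 1 n, (∏ j ∈ Icc i (n - 1), a j) * ∏ j ∈ Icc 1 (i - 1), b j :=
  sum_congr rfl fun i hi => by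
    rw [Nat.Icc_sub_one_right_eq_Ico_of_pos (mem_Icc.mp hi).1,
      Nat.Icc_sub_one_right_eq_Ico_of_pos one_pos]

theorem green_eq_sum_Icc (y j : ℕ) :
    green a b n y j =
      (∑ k ∈ Icc 1 (min y j), (∏ l ∈ Icc k (j - 1), a l) * ∏ l ∈ Icc 1 (k - 1), b l) *
        ∑ k ∈ Icc (max y j + 1) n,
          (∏ l ∈ Icc k (n - 1), a l) * ∏ l ∈ Icc (j + 1) (k - 1), b l := by
  rw [green, leftSum, rightSum]
  congr 1 <;> refine sum_congr rfl fun k hk => ?_ <;> simp only [mem_Icc] at hk <;>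
    rw [Nat.Icc_sub_one_right_eq_Ico_of_pos (by omega),
      Nat.Icc_sub_one_right_eq_Ico_of_pos (by omega)]

end Green

end BirthDeath

open BirthDeath

theorem expected_absorption_time_general (n : ℕ) (a b τ : ℕ → ℝ)
    (ha : ∀ y, 1 ≤ y → y ≤ n - 1 → 0 < a y)
    (hb : ∀ y, 1 ≤ y → y ≤ n - 1 → 0 < b y)
    (hτ0 : τ 0 = 0) (hτn : τ n = 0)
    (hrec : ∀ y, 1 ≤ y → y ≤ n - 1 →
      τ y = 1 + a y * τ (y + 1) + b y * τ (y - 1) + (1 - a y - b y) * τ y) :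
    ∀ y ≤ n, τ y =
      (1 / (∑ i ∈ Icc 1 n, (∏ j ∈ Icc i (n - 1), a j) * ∏ j ∈ Icc 1 (i - 1), b j)) *
        ∑ j ∈ Icc 1 (n - 1),
          (∑ k ∈ Icc 1 (min y j), (∏ l ∈ Icc k (j - 1), a l) * ∏ l ∈ Icc 1 (k - 1), b l) *
            ∑ k ∈ Icc (max y j + 1) n,
              (∏ l ∈ Icc k (n - 1), a l) * ∏ l ∈ Icc (j + 1) (k - 1), b l := by
  rcases n.eq_zero_or_pos with rfl | hn
  · intro y hy
    simp [Nat.le_zero.mp hy, hτ0]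
  set u : ℕ → ℝ := (delta a b n)⁻¹ • fun x => ∑ j ∈ Icc 1 (n - 1), green a b n x j
  have hΔ : delta a b n ≠ 0 := (delta_pos hn ha fun y h1 h2 => (hb y h1 h2).le).ne'
  have hτu : ∀ y ≤ n, (τ - u) y = 0 := by
    refine eq_zero_of_generator_eq_zero ha (fun y h1 h2 => (hb y h1 h2).le) ?_ ?_
      fun y h1 h2 => ?_
    · simp [u, hτ0, green_zero_left]
    · simp only [u, Pi.sub_apply, Pi.smul_apply, hτn, smul_eq_mul]
      rw [sum_eq_zero fun j hj => green_top_left (by simp only [mem_Icc] at hj; omega), mul_zero,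
        sub_zero]
    · have hτgen : generator a b τ y = -1 := by
        rw [generator_apply]
        linear_combination -hrec y h1 h2
      rw [map_sub, map_smul, Pi.sub_apply, Pi.smul_apply, hτgen, generator_sum_green h1 h2,
        smul_eq_mul, mul_neg, inv_mul_cancel₀ hΔ, sub_self]
  intro y hy
  rw [sub_eq_zero.mp (hτu y hy)]
  simp only [u, Pi.smul_apply, smul_eq_mul, one_div, delta_eq_sum_Icc, green_eq_sum_Icc]

/-- Expected absorption time of the birth-death chain on `{0,...,n}`:
`τ_y = (1/Δ) ∑_{j=1}^{n-1} (∑_{k=1}^{min(y,j)} ∏_{l=k}^{j-1} a_l ∏_{l=1}^{k-1} b_l)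
      (∑_{k=max(y,j)+1}^{n} ∏_{l=k}^{n-1} a_l ∏_{l=j+1}^{k-1} b_l)`. -/
theorem expected_absorption_time (n : ℕ) (hn : 1 ≤ n) (a b τ : ℕ → ℝ)
    (ha : ∀ y, 1 ≤ y → y ≤ n - 1 → 0 < a y)
    (hb : ∀ y, 1 ≤ y → y ≤ n - 1 → 0 < b y)
    (hab : ∀ y, 1 ≤ y → y ≤ n - 1 → a y + b y ≤ 1)
    (hτ0 : τ 0 = 0) (hτn : τ n = 0)
    (hrec : ∀ y, 1 ≤ y → y ≤ n - 1 →
      τ y = 1 + a y * τ (y + 1) + b y * τ (y - 1) + (1 - a y - b y) * τ y) :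
    ∀ y ≤ n, τ y =
      (1 / (∑ i ∈ Icc 1 n, (∏ j ∈ Icc i (n - 1), a j) * ∏ j ∈ Icc 1 (i - 1), b j)) *
        ∑ j ∈ Icc 1 (n - 1),
          (∑ k ∈ Icc 1 (min y j), (∏ l ∈ Icc k (j - 1), a l) * ∏ l ∈ Icc 1 (k - 1), b l) *
            ∑ k ∈ Icc (max y j + 1) n,
              (∏ l ∈ Icc k (n - 1), a l) * ∏ l ∈ Icc (j + 1) (k - 1), b l :=
  expected_absorption_time_general n a b τ ha hb hτ0 hτn hrec
end
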